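/- Let C be a permutation-invariant partition of the player set of a finite normal-form game with identical interests, let q ∈ Δ^n, let q̄ be its centroid distribution, and let ε ≥ 0. If p ∈ BR^ε(q̄), then the centroid distribution p̄ of p also satisfies p̄ ∈ BR^ε(q̄). -/

import Mathlib

/-!
`U` is affine in each player's strategy, so every `ε`-best-response set `BR_i^ε(r)` is convex.
If `r` is class-constant, then swapping two players `i, j` of one class turns `r` with `i`'s
strategy replaced by `x` into `r` with `j`'s strategy replaced by `x`, so permutation invariance
gives `BR_j^ε(r) ⊆ BR_i^ε(r)`. For `r = q̄`, the centroid `p̄_i` is therefore an average of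
points `p_j ∈ BR_j^ε(q̄) ⊆ BR_i^ε(q̄)`, and lies in `BR_i^ε(q̄)` by convexity.
-/

open MeasureTheory Filter Topology

noncomputable section

namespace ECFP

variable {ι A κ : Type*}

/-- The mixed-strategy simplex over a finite action set `Y` inside the action universe `A`. -/
def simplex (Y : Finset A) : Set (A → ℝ) :=
  {p | (∀ a, 0 ≤ p a) ∧ (∀ a, a ∉ Y → p a = 0) ∧ ∑ a ∈ Y, p a = 1}

/-- The space `Δⁿ` of joint mixed strategies. -/
def Delta (Y : ι → Finset A) : Set (ι → A → ℝ) :=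
  {p | ∀ i, p i ∈ simplex (Y i)}

variable [Fintype ι] [DecidableEq ι] [Fintype A] [DecidableEq κ]

/-- The mixed extension of the common utility `u`:
`U(p₁,…,pₙ) = ∑_y u(y) p₁(y₁)⋯pₙ(yₙ)`. -/
def U (u : (ι → A) → ℝ) (p : ι → A → ℝ) : ℝ :=
  ∑ y : ι → A, u y * ∏ i, p i (y i)

/-- The `ε`-best-response set of player `i` against the joint strategy `p`
(only the components `p_{-i}` matter, since player `i`'s component is overwritten):
`{pᵢ ∈ Δᵢ : U(pᵢ,p_{-i}) ≥ U(qᵢ,p_{-i}) - ε  ∀ qᵢ ∈ Δᵢ}`. -/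
def BRi (Y : ι → Finset A) (u : (ι → A) → ℝ) (ε : ℝ) (p : ι → A → ℝ) (i : ι) :
    Set (A → ℝ) :=
  {pi | pi ∈ simplex (Y i) ∧
    ∀ qi ∈ simplex (Y i),
      U u (Function.update p i pi) ≥ U u (Function.update p i qi) - ε}

/-- The joint `ε`-best-response set `BR^ε(p) = (BR₁^ε(p_{-1}),…,BRₙ^ε(p_{-n}))`. -/
def BR (Y : ι → Finset A) (u : (ι → A) → ℝ) (ε : ℝ) (p : ι → A → ℝ) :
    Set (ι → A → ℝ) :=
  {b | ∀ i, b i ∈ BRi Y u ε p i}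

/-- The profile obtained from `y` by swapping the strategies of players `i` and `j`. -/
def swapStrat (y : ι → A) (i j : ι) : ι → A :=
  Function.update (Function.update y i (y j)) j (y i)

/-- `cls : ι → κ` encodes a permutation-invariant partition of the player set (the classes
are the fibers of `cls`): players in the same class have the same action set, and the utility
is invariant under swapping the strategies of two same-class players in any strategy profile. -/
def PermInvariant (Y : ι → Finset A) (u : (ι → A) → ℝ) (cls : ι → κ) : Prop :=
  ∀ i j : ι, cls i = cls j →
    Y i = Y j ∧ ∀ y : ι → A, (∀ k, y k ∈ Y k) → u (swapStrat y i j) = u y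

/-- The equivalence class (as a finset of players) of player `i`. -/
def cluster (cls : ι → κ) (i : ι) : Finset ι :=
  Finset.univ.filter (fun j => cls j = cls i)

/-- The centroid distribution `p̄`: player `i` is assigned the average of the strategies of
the players in `i`'s class. -/
def centroid (cls : ι → κ) (p : ι → A → ℝ) : ι → A → ℝ :=
  fun i => ((cluster cls i).card : ℝ)⁻¹ • ∑ j ∈ cluster cls i, p j

/-- A joint strategy is class-constant if same-class players use identical strategies. -/
def classConst (cls : ι → κ) (p : ι → A → ℝ) : Prop :=
  ∀ i j, cls i = cls j → p i = p j

/-- The set of Nash equilibria. -/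
def NE (Y : ι → Finset A) (u : (ι → A) → ℝ) : Set (ι → A → ℝ) :=
  {p | p ∈ Delta Y ∧ ∀ i, ∀ qi ∈ simplex (Y i),
    U u (Function.update p i qi) ≤ U u p}

/-- The set of symmetric Nash equilibria relative to the partition `cls`. -/
def SNE (Y : ι → Finset A) (u : (ι → A) → ℝ) (cls : ι → κ) : Set (ι → A → ℝ) :=
  {p | p ∈ NE Y u ∧ classConst cls p}

/-- The set of mean-centric equilibria relative to the partition `cls`:
`U(pᵢ, p̄_{-i}) ≥ U(pᵢ', p̄_{-i})` for all `pᵢ' ∈ Δᵢ` and all `i`. -/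
def MCE (Y : ι → Finset A) (u : (ι → A) → ℝ) (cls : ι → κ) : Set (ι → A → ℝ) :=
  {p | p ∈ Delta Y ∧ ∀ i, ∀ qi ∈ simplex (Y i),
    U u (Function.update (centroid cls p) i qi)
      ≤ U u (Function.update (centroid cls p) i (p i))}

/-- `V(p) = (1/n) ∑ᵢ U(pᵢ, p̄_{-i})`. -/
def Vfun (u : (ι → A) → ℝ) (cls : ι → κ) (p : ι → A → ℝ) : ℝ :=
  (Fintype.card ι : ℝ)⁻¹ * ∑ i, U u (Function.update (centroid cls p) i (p i))

/-- A discrete-time ECFP process w.r.t. `(Γ, 𝒞)`: `q(1) = a(1)`,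
`q(t+1) = q(t) + γₜ (a(t+1) − q(t))` and `a(t+1) ∈ BR^{εₜ}(q̄(t))` for all `t`
(time is indexed by `ℕ`, i.e. `t = 0` plays the role of `t = 1` in the paper). -/
structure IsECFP (Y : ι → Finset A) (u : (ι → A) → ℝ) (cls : ι → κ)
    (γ ε : ℕ → ℝ) (a q : ℕ → ι → A → ℝ) : Prop where
  a_init_mem : a 0 ∈ Delta Y
  q_mem : ∀ t, q t ∈ Delta Y
  init : q 0 = a 0
  step : ∀ t, q (t + 1) = q t + γ t • (a (t + 1) - q t)
  br : ∀ t, a (t + 1) ∈ BR Y u (ε t) (centroid cls (q t))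

/-- A solution of the differential inclusion `ẋ ∈ F(x)` taking values in `Δⁿ`:
an everywhere-`Δⁿ`-valued trajectory on `[0,∞)` which is the integral of a locally
integrable selection `g(t) ∈ F(x(t))` (a.e.). -/
def IsSolution (Y : ι → Finset A) (F : (ι → A → ℝ) → Set (ι → A → ℝ))
    (x : ℝ → ι → A → ℝ) : Prop :=
  (∀ t : ℝ, 0 ≤ t → x t ∈ Delta Y) ∧
  ∃ g : ℝ → ι → A → ℝ,
    LocallyIntegrableOn g (Set.Ici (0 : ℝ)) ∧
    (∀ᵐ t ∂(volume.restrict (Set.Ici (0 : ℝ))), g t ∈ F (x t)) ∧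
    ∀ t : ℝ, 0 ≤ t → x t = x 0 + ∫ s in Set.Ioc (0 : ℝ) t, g s

/-- Right-hand side of the joint CT-ECFP differential inclusion `q̇ ∈ BR(q̄) − q`. -/
def Fjoint (Y : ι → Finset A) (u : (ι → A) → ℝ) (cls : ι → κ)
    (q : ι → A → ℝ) : Set (ι → A → ℝ) :=
  (fun b => b - q) '' BR Y u 0 (centroid cls q)

/-- Right-hand side of the centroid CT-ECFP differential inclusion `ẏ ∈ BR(y) − y`. -/
def Fcent (Y : ι → Finset A) (u : (ι → A) → ℝ)
    (y : ι → A → ℝ) : Set (ι → A → ℝ) :=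
  (fun b => b - y) '' BR Y u 0 y

/-- The ω-limit set of a continuous-time trajectory: all limits of sequences
`x(t_k)` with `t_k → ∞`. -/
def omegaLimitSet (x : ℝ → ι → A → ℝ) : Set (ι → A → ℝ) :=
  {p | ∃ tk : ℕ → ℝ, Tendsto tk atTop atTop ∧ Tendsto (fun k => x (tk k)) atTop (𝓝 p)}

/-- The set of limit points of a (discrete-time) sequence. -/
def seqLimitPoints (q : ℕ → ι → A → ℝ) : Set (ι → A → ℝ) :=
  {p | ∃ φ : ℕ → ℕ, StrictMono φ ∧ Tendsto (fun k => q (φ k)) atTop (𝓝 p)}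

/-- A compact set `X ⊆ Δⁿ` is internally chain transitive for the inclusion `ẋ ∈ F(x)`:
any two points of `X` can be joined, for every `ε > 0` and `T > 0`, by finitely many
solution pieces of duration `> T` staying in `X`, with jumps of size `≤ ε`. -/
def InternallyChainTransitive (Y : ι → Finset A)
    (F : (ι → A → ℝ) → Set (ι → A → ℝ)) (X : Set (ι → A → ℝ)) : Prop :=
  IsCompact X ∧ X ⊆ Delta Y ∧
  ∀ ξ ∈ X, ∀ η ∈ X, ∀ ε : ℝ, 0 < ε → ∀ T : ℝ, 0 < T →
    ∃ k : ℕ, 0 < k ∧ ∃ x : ℕ → ℝ → ι → A → ℝ, ∃ tt : ℕ → ℝ,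
      (∀ i < k, IsSolution Y F (x i)) ∧
      (∀ i < k, T < tt i) ∧
      (∀ i < k, ∀ s : ℝ, 0 ≤ s → s ≤ tt i → x i s ∈ X) ∧
      (∀ i, i + 1 < k → ‖x i (tt i) - x (i + 1) 0‖ ≤ ε) ∧
      ‖x 0 0 - ξ‖ ≤ ε ∧ ‖x (k - 1) (tt (k - 1)) - η‖ ≤ ε

end ECFP

namespace ECFP

variable {ι A κ : Type*}

lemma mem_of_mem_simplex_of_ne_zero {Y : Finset A} {x : A → ℝ} (hx : x ∈ simplex Y) {a : A}
    (ha : x a ≠ 0) : a ∈ Y :=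
  by_contra fun h => ha (hx.2.1 a h)

lemma convex_simplex (Y : Finset A) : Convex ℝ (simplex Y) := by
  rintro x ⟨hx₀, hxY, hx₁⟩ z ⟨hz₀, hzY, hz₁⟩ a b ha hb hab
  refine ⟨fun c => ?_, fun c hc => ?_, ?_⟩
  · have := hx₀ c
    have := hz₀ c
    simp only [Pi.add_apply, Pi.smul_apply, smul_eq_mul]
    positivity
  · simp [hxY c hc, hzY c hc]
  · simp [Finset.sum_add_distrib, ← Finset.mul_sum, hx₁, hz₁, hab]

lemma swapStrat_eq_comp_swap [DecidableEq ι] (y : ι → A) (i j : ι) :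
    swapStrat y i j = y ∘ Equiv.swap i j := by
  funext k
  by_cases hkj : k = j
  · subst hkj
    simp [swapStrat]
  by_cases hki : k = i
  · subst hki
    simp [swapStrat, Function.update_of_ne hkj]
  · simp [swapStrat, Function.update_of_ne hki, Function.update_of_ne hkj,
      Equiv.swap_apply_of_ne_of_ne hki hkj]

lemma prod_update_apply [Fintype ι] [DecidableEq ι] (r : ι → A → ℝ) (i : ι) (x : A → ℝ)
    (y : ι → A) :
    ∏ k, Function.update r i x k (y k) = x (y i) * ∏ k ∈ Finset.univ.erase i, r k (y k) := by
  rw [← Finset.mul_prod_erase _ _ (Finset.mem_univ i), Function.update_self]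
  congr 1
  exact Finset.prod_congr rfl fun k hk => by
    rw [Function.update_of_ne (Finset.ne_of_mem_erase hk)]

section Cluster

variable [Fintype ι] [DecidableEq κ]

lemma mem_cluster {cls : ι → κ} {i j : ι} : j ∈ cluster cls i ↔ cls j = cls i := by
  simp [cluster]

lemma centroid_mem_of_convex (cls : ι → κ) {S : Set (A → ℝ)} (hS : Convex ℝ S)
    {p : ι → A → ℝ} {i : ι} (hp : ∀ j ∈ cluster cls i, p j ∈ S) : centroid cls p i ∈ S := by
  have hcard : ((cluster cls i).card : ℝ) ≠ 0 := by
    exact_mod_cast (Finset.card_pos.mpr ⟨i, mem_cluster.mpr rfl⟩).ne'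
  rw [centroid, Finset.smul_sum]
  exact hS.sum_mem (fun _ _ => by positivity) (by simp [hcard]) hp

lemma classConst_centroid (cls : ι → κ) (p : ι → A → ℝ) : classConst cls (centroid cls p) :=
  fun i j h => by simp [centroid, cluster, h]

end Cluster

section Utility

variable [Fintype ι] [DecidableEq ι] [Fintype A]

lemma U_update_add_smul (u : (ι → A) → ℝ) (r : ι → A → ℝ) (i : ι) (a b : ℝ)
    (x z : A → ℝ) :
    U u (Function.update r i (a • x + b • z))
      = a * U u (Function.update r i x) + b * U u (Function.update r i z) := by
  simp only [U, prod_update_apply, Finset.mul_sum, ← Finset.sum_add_distrib]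
  refine Finset.sum_congr rfl fun y _ => ?_
  simp only [Pi.add_apply, Pi.smul_apply, smul_eq_mul]
  ring

lemma convex_BRi (Y : ι → Finset A) (u : (ι → A) → ℝ) (ε : ℝ) (r : ι → A → ℝ) (i : ι) :
    Convex ℝ (BRi Y u ε r i) := by
  rintro x ⟨hx, hx_br⟩ z ⟨hz, hz_br⟩ a b ha hb hab
  refine ⟨convex_simplex _ hx hz ha hb hab, fun w hw => ?_⟩
  rw [U_update_add_smul]
  linear_combination a * hx_br w hw + b * hz_br w hw - (U u (Function.update r i w) - ε) * hab

variable {Y : ι → Finset A} {u : (ι → A) → ℝ} {i j : ι}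

lemma U_comp_swap (hu : ∀ y : ι → A, (∀ k, y k ∈ Y k) → u (swapStrat y i j) = u y)
    {s : ι → A → ℝ} (hs : s ∈ Delta Y) :
    U u (s ∘ Equiv.swap i j) = U u s := by
  set σ := Equiv.swap i j
  have hweight (y : ι → A) : ∏ k, (s ∘ σ) k (y k) = ∏ k, s k ((y ∘ σ) k) := by
    simpa [σ] using Equiv.prod_comp σ fun k => s k (y (σ k))
  -- only profiles of positive weight matter, and those lie in `∏ₖ Y k`
  have hsupp (y : ι → A) : u (y ∘ σ) * ∏ k, s k (y k) = u y * ∏ k, s k (y k) := by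
    by_cases hy : ∏ k, s k (y k) = 0
    · simp [hy]
    have hyY : ∀ k, y k ∈ Y k := fun k =>
      mem_of_mem_simplex_of_ne_zero (hs k) (Finset.prod_ne_zero_iff.mp hy k (Finset.mem_univ k))
    rw [← swapStrat_eq_comp_swap, hu y hyY]
  calc U u (s ∘ σ) = ∑ y : ι → A, u y * ∏ k, s k ((y ∘ σ) k) := by simp only [U, hweight]
    _ = ∑ y : ι → A, u (y ∘ σ) * ∏ k, s k (y k) :=
        Fintype.sum_bijective (· ∘ σ) (Function.Involutive.bijective fun y => by
          funext k; simp [σ]) _ _ fun y => by simp [Function.comp_def, σ]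
    _ = U u s := Finset.sum_congr rfl fun y _ => hsupp y

lemma U_update_eq_of_swap (hu : ∀ y : ι → A, (∀ k, y k ∈ Y k) → u (swapStrat y i j) = u y)
    (hY : Y i = Y j) {r : ι → A → ℝ} (hr : r ∈ Delta Y) (hrij : r i = r j) {x : A → ℝ}
    (hx : x ∈ simplex (Y i)) :
    U u (Function.update r i x) = U u (Function.update r j x) := by
  have hr_swap : r ∘ Equiv.swap i j = r := by
    funext k
    rcases eq_or_ne k i with rfl | hki
    · simp [hrij]
    rcases eq_or_ne k j with rfl | hkj
    · simp [hrij]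
    · simp [Equiv.swap_apply_of_ne_of_ne hki hkj]
  have hmem : Function.update r i x ∈ Delta Y := fun k => by
    rcases eq_or_ne k i with rfl | hki
    · simpa using hx
    · simpa [hki] using hr k
  rw [← U_comp_swap hu hmem, Function.update_comp_equiv, hr_swap, Equiv.symm_swap,
    Equiv.swap_apply_left]

lemma BRi_subset_of_swap {ε : ℝ}
    (hu : ∀ y : ι → A, (∀ k, y k ∈ Y k) → u (swapStrat y i j) = u y) (hY : Y i = Y j)
    {r : ι → A → ℝ} (hr : r ∈ Delta Y) (hrij : r i = r j) :
    BRi Y u ε r j ⊆ BRi Y u ε r i := by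
  rintro x ⟨hx, hx_br⟩
  rw [← hY] at hx
  refine ⟨hx, fun w hw => ?_⟩
  rw [U_update_eq_of_swap hu hY hr hrij hx, U_update_eq_of_swap hu hY hr hrij hw]
  exact hx_br w (hY ▸ hw)

end Utility

variable [Fintype ι] [DecidableEq ι] [Fintype A] [DecidableEq κ]

variable [Nonempty ι]

theorem centroid_mem_BR_general
    (Y : ι → Finset A) (u : (ι → A) → ℝ)
    (cls : ι → κ) (hpi : PermInvariant Y u cls)
    (ε : ℝ) (q p : ι → A → ℝ) (hq : q ∈ Delta Y)
    (hp : p ∈ BR Y u ε (centroid cls q)) :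
    centroid cls p ∈ BR Y u ε (centroid cls q) := by
  have hq_bar : centroid cls q ∈ Delta Y := fun i =>
    centroid_mem_of_convex cls (convex_simplex _) fun j hj =>
      (hpi i j (mem_cluster.mp hj).symm).1 ▸ hq j
  intro i
  refine centroid_mem_of_convex cls (convex_BRi Y u ε _ i) fun j hj => ?_
  have hij : cls i = cls j := (mem_cluster.mp hj).symm
  exact BRi_subset_of_swap (hpi i j hij).2 (hpi i j hij).1 hq_bar
    (classConst_centroid cls q i j hij) (hp j)

/-- **Lemma 2.** If `p ∈ BR^ε(q̄)` then the centroid distribution `p̄` also satisfies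
`p̄ ∈ BR^ε(q̄)`. -/
theorem centroid_mem_BR
    (Y : ι → Finset A) (hY : ∀ i, (Y i).Nonempty) (u : (ι → A) → ℝ)
    (cls : ι → κ) (hpi : PermInvariant Y u cls)
    (ε : ℝ) (hε : 0 ≤ ε) (q p : ι → A → ℝ) (hq : q ∈ Delta Y)
    (hp : p ∈ BR Y u ε (centroid cls q)) :
    centroid cls p ∈ BR Y u ε (centroid cls q) :=
  centroid_mem_BR_general Y u cls hpi ε q p hq hp

end ECFP
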